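/- arXiv:1006.2585 — 4 statements merged into one kernel-verified Lean document; each statement's English description precedes it below -/
import Mathlib

section
/- Almost surely, L_n = 0 for infinitely many n; consequently, with probability one every species born with fitness less than the critical value f_c becomes extinct after a finite random time (for every m with J_m = 0 and U_m < f_c there exists n > m with L_n = 0, at which time the species born at step m is dead). -/
open MeasureTheory ProbabilityTheory Filter

open scoped NNReal ENNReal Topology

/-!
While `L` is positive it moves exactly like the random walk `S` whose increments are `+1` on a
birth with fitness below `f_c` and `-1` on a death event, so `L` returns to `0` as soon as `S`
falls below its current level by more than `L`. Criticality makes the increments centred: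
`P(birth below f_c) = p · f_c = q = P(death event)`. Hence `S` is a martingale with bounded
increments, and such a martingale either converges or is unbounded in both directions. Since
by the second Borel–Cantelli lemma infinitely many steps are `-1`, `S` cannot converge, so it
is unbounded below and `L` hits `0` infinitely often.
-/

section Reflection

variable {L : ℕ → ℕ} {S : ℕ → ℝ}

theorem exists_mem_Ico_eq_zero_of_sub_lt
    (hstep : ∀ n, L n ≠ 0 → (L (n + 1) : ℝ) - L n = S (n + 1) - S n) {N n : ℕ} (hNn : N ≤ n)
    (hlt : S n - S N < -L N) : ∃ k ∈ Finset.Ico N n, L k = 0 := by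
  by_contra! hne
  have htrack : ∀ k, N ≤ k → k ≤ n → (L k : ℝ) - L N = S k - S N := by
    intro k hNk hkn
    induction k, hNk using Nat.le_induction with
    | base => ring
    | succ k hNk ih =>
      have := hstep k (hne k (Finset.mem_Ico.2 ⟨hNk, hkn⟩))
      linarith [ih (by omega)]
  linarith [htrack n hNn le_rfl, (L n).cast_nonneg (α := ℝ)]

theorem frequently_eq_zero_of_not_bddBelow
    (hstep : ∀ n, L n ≠ 0 → (L (n + 1) : ℝ) - L n = S (n + 1) - S n)
    (hS : ¬BddBelow (Set.range S)) : ∃ᶠ n in atTop, L n = 0 := by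
  rw [frequently_atTop]
  intro N
  obtain ⟨b, hb⟩ := ((Set.finite_Iic N).image S).bddBelow
  obtain ⟨_, ⟨n, rfl⟩, hn⟩ := not_bddBelow_iff.1 hS (min b (S N - L N))
  have hNn : N ≤ n := by
    by_contra! hnN
    linarith [hb ⟨n, Set.mem_Iic.2 hnN.le, rfl⟩, min_le_left b (S N - L N)]
  obtain ⟨k, hk, hk0⟩ := exists_mem_Ico_eq_zero_of_sub_lt hstep hNn
    (by linarith [min_le_right b (S N - L N)])
  exact ⟨k, (Finset.mem_Ico.1 hk).1, hk0⟩

end Reflection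

section Probability

variable {Ω : Type*} {m0 : MeasurableSpace Ω} {μ : Measure Ω}

theorem ProbabilityTheory.iIndepFun.ae_frequently_mem {β : Type*} [MeasurableSpace β]
    {X : ℕ → Ω → β} (hX : iIndepFun X μ) (hXm : ∀ n, Measurable (X n)) {A : Set β}
    (hA : MeasurableSet A) {ε : ℝ≥0∞} (hε : ε ≠ 0) (hle : ∀ n, ε ≤ μ (X n ⁻¹' A)) :
    ∀ᵐ ω ∂μ, ∃ᶠ n in atTop, X n ω ∈ A := by
  have := hX.isProbabilityMeasure
  have hmeas : ∀ n, MeasurableSet (X n ⁻¹' A) := fun n => hXm n hA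
  have hsets : iIndepSet (fun n => X n ⁻¹' A) μ :=
    hX.iIndep.iIndepSets'.iIndepSet_of_mem (fun n => comap_measurable (X n) hA) hmeas
  have hsum : ∑' n, μ (X n ⁻¹' A) = ∞ :=
    top_unique ((ENNReal.tsum_const_eq_top_of_ne_zero hε).symm.le.trans (ENNReal.tsum_le_tsum hle))
  have hlimsup := measure_limsup_eq_one hmeas hsets hsum
  filter_upwards [(ae_iff_measure_eq (MeasurableSet.measurableSet_limsup hmeas).nullMeasurableSet).2
    (hlimsup.trans measure_univ.symm)] with ω hω
  exact mem_limsup_iff_frequently_mem.1 hω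

theorem MeasureTheory.Martingale.ae_not_bddBelow_of_frequently {ℱ : Filtration ℕ m0}
    [IsFiniteMeasure μ] {f : ℕ → Ω → ℝ} {R : ℝ≥0} {ε : ℝ} (hf : Martingale f ℱ μ)
    (hbdd : ∀ᵐ ω ∂μ, ∀ i, |f (i + 1) ω - f i ω| ≤ R) (hε : 0 < ε)
    (hfreq : ∀ᵐ ω ∂μ, ∃ᶠ n in atTop, ε ≤ |f (n + 1) ω - f n ω|) :
    ∀ᵐ ω ∂μ, ¬BddBelow (Set.range fun n => f n ω) := by
  filter_upwards [hf.bddAbove_range_iff_bddBelow_range hbdd,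
    hf.submartingale.bddAbove_iff_exists_tendsto hbdd, hfreq] with ω habove hconv hjumps hbelow
  obtain ⟨c, hc⟩ := hconv.1 (habove.2 hbelow)
  have hdiff : Tendsto (fun n => |f (n + 1) ω - f n ω|) atTop (𝓝 0) := by
    simpa using ((hc.comp (tendsto_add_atTop_nat 1)).sub hc).abs
  obtain ⟨n, hεn, hn⟩ := (hjumps.and_eventually (hdiff.eventually (gt_mem_nhds hε))).exists
  exact hεn.not_gt hn

theorem measure_preimage_Iio_of_map_eq_uniform {X : Ω → ℝ} (hX : Measurable X)
    (hmap : μ.map X = volume.restrict (Set.Icc 0 1)) {c : ℝ} (hc1 : c ≤ 1) :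
    μ (X ⁻¹' Set.Iio c) = ENNReal.ofReal c := by
  have hIco : Set.Iio c ∩ Set.Icc 0 1 = Set.Ico 0 c :=
    Set.ext fun x => ⟨fun ⟨h1, h2, _⟩ => ⟨h2, h1⟩, fun ⟨h1, h2⟩ => ⟨h2, h1, h2.le.trans hc1⟩⟩
  rw [← Measure.map_apply hX measurableSet_Iio, hmap, Measure.restrict_apply measurableSet_Iio,
    hIco, Real.volume_Ico, sub_zero]

namespace MeasureTheory

variable {ι : Type*} {m : ι → MeasurableSpace Ω} {τ : ι → ℕ}

abbrev generatedAt (m : ι → MeasurableSpace Ω) (τ : ι → ℕ) (n : ℕ) : MeasurableSpace Ω :=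
  ⨆ i ∈ τ ⁻¹' {n}, m i

theorem le_generatedAt {i : ι} {n : ℕ} (hi : τ i = n) : m i ≤ generatedAt m τ n :=
  le_iSup₂ (f := fun i (_ : τ i ∈ ({n} : Set ℕ)) => m i) i hi

def Filtration.generatedBefore (m : ι → MeasurableSpace Ω) (τ : ι → ℕ) (hm : ∀ i, m i ≤ m0) :
    Filtration ℕ m0 where
  seq n := ⨆ i ∈ {i | τ i < n}, m i
  mono' _ _ hab := biSup_mono fun _ hi => lt_of_lt_of_le hi hab
  le' _ := iSup₂_le fun i _ => hm i

namespace Filtration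

theorem le_generatedBefore (hm : ∀ i, m i ≤ m0) {i : ι} {n : ℕ} (hi : τ i < n) :
    m i ≤ generatedBefore m τ hm n :=
  le_iSup₂ (f := fun i (_ : τ i < n) => m i) i hi

theorem generatedAt_le_generatedBefore_succ (hm : ∀ i, m i ≤ m0) (n : ℕ) :
    generatedAt m τ n ≤ generatedBefore m τ hm (n + 1) :=
  iSup₂_le fun _ hi => le_generatedBefore hm (Nat.lt_succ_of_le (le_of_eq hi))

theorem indep_generatedAt_generatedBefore (hm : ∀ i, m i ≤ m0) (h : iIndep m μ) (n : ℕ) :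
    Indep (generatedAt m τ n) (generatedBefore m τ hm n) μ :=
  indep_iSup_of_disjoint hm h (Set.disjoint_left.2 fun i hi hlt => (show τ i < n from hlt).ne hi)

end Filtration

theorem martingale_sum_range_of_indep {E : Type*} [NormedAddCommGroup E]
    [NormedSpace ℝ E] [CompleteSpace E] [IsFiniteMeasure μ] {ℱ : Filtration ℕ m0}
    {𝒢 : ℕ → MeasurableSpace Ω} {ξ : ℕ → Ω → E} (h𝒢 : ∀ n, 𝒢 n ≤ ℱ (n + 1))
    (hξ : ∀ n, StronglyMeasurable[𝒢 n] (ξ n)) (hindep : ∀ n, Indep (𝒢 n) (ℱ n) μ)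
    (hint : ∀ n, Integrable (ξ n) μ) (hmean : ∀ n, μ[ξ n] = 0) :
    Martingale (fun n ω => ∑ i ∈ Finset.range n, ξ i ω) ℱ μ := by
  refine martingale_of_condExp_sub_eq_zero_nat (fun n => ?_) (fun n => ?_) fun n => ?_
  · exact Finset.stronglyMeasurable_fun_sum _ fun i hi =>
      (hξ i).mono ((h𝒢 i).trans (ℱ.mono (Finset.mem_range.1 hi)))
  · exact integrable_finsetSum _ fun i _ => hint i
  · have hsub : (fun ω => ∑ i ∈ Finset.range (n + 1), ξ i ω) -
        (fun ω => ∑ i ∈ Finset.range n, ξ i ω) = ξ n := by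
      funext ω; simp [Finset.sum_range_succ]
    rw [hsub]
    exact (condExp_indep_eq ((h𝒢 n).trans (ℱ.le _)) (ℱ.le n) (hξ n) (hindep n)).trans
      (.of_eq (funext fun _ => hmean n))

end MeasureTheory

namespace GMS

variable {J : ℕ → Ω → ℕ} {U : ℕ → Ω → ℝ} {c : ℝ}

noncomputable def increment (c : ℝ) (J : ℕ → Ω → ℕ) (U : ℕ → Ω → ℝ) (n : ℕ) : Ω → ℝ :=
  {ω | J n ω = 0 ∧ U n ω < c}.indicator 1 - {ω | J n ω = 1}.indicator 1

noncomputable def walk (c : ℝ) (J : ℕ → Ω → ℕ) (U : ℕ → Ω → ℝ) (n : ℕ) (ω : Ω) : ℝ :=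
  ∑ i ∈ Finset.range n, increment c J U i ω

theorem walk_succ_sub_walk (n : ℕ) (ω : Ω) :
    walk c J U (n + 1) ω - walk c J U n ω = increment c J U n ω := by
  simp [walk, Finset.sum_range_succ]

theorem abs_increment_le_one (n : ℕ) (ω : Ω) : |increment c J U n ω| ≤ 1 := by
  simp only [increment, Pi.sub_apply, Set.indicator_apply]
  split_ifs <;> norm_num

theorem increment_of_eq_one {n : ℕ} {ω : Ω} (h : J n ω = 1) : increment c J U n ω = -1 := by
  simp [increment, h]

theorem cast_succ_sub_eq_increment {L : ℕ → Ω → ℕ}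
    (hL : ∀ n ω, L (n + 1) ω =
      if J n ω = 0 ∧ U n ω < c then L n ω + 1
      else if J n ω = 1 ∧ 0 < L n ω then L n ω - 1 else L n ω)
    {n : ℕ} {ω : Ω} (hpos : L n ω ≠ 0) :
    (L (n + 1) ω : ℝ) - L n ω = increment c J U n ω := by
  rw [hL]
  by_cases hbirth : J n ω = 0 ∧ U n ω < c
  · simp [increment, hbirth]
  · by_cases hdeath : J n ω = 1
    · simp [increment, hdeath, Nat.pos_of_ne_zero hpos, Nat.one_le_iff_ne_zero.2 hpos]
    · simp [increment, hbirth, hdeath]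

variable {p q : ℝ}

theorem measure_birth_eq_measure_death [IsProbabilityMeasure μ]
    (hp : 1 / 2 < p) (hp1 : p < 1) (hq : q = 1 - p)
    (hJmeas : ∀ n, Measurable (J n)) (hUmeas : ∀ n, Measurable (U n)) (hJval : ∀ n ω, J n ω ≤ 1)
    (hJdist : ∀ n, μ {ω | J n ω = 1} = ENNReal.ofReal q)
    (hUdist : ∀ n, Measure.map (U n) μ = volume.restrict (Set.Icc (0 : ℝ) 1))
    (hindep : iIndepFun (Sum.elim (fun n ω => (J n ω : ℝ)) U) μ) (n : ℕ) :
    μ {ω | J n ω = 0 ∧ U n ω < q / p} = μ {ω | J n ω = 1} := by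
  have hp0 : 0 < p := by linarith
  have hq0 : 0 < q := by linarith
  have hJ0 : μ {ω | J n ω = 0} = ENNReal.ofReal p := by
    have hcompl : {ω | J n ω = 0} = {ω | J n ω = 1}ᶜ := by
      ext ω; have := hJval n ω; simp only [Set.mem_ofPred_eq, Set.mem_compl_iff]; omega
    have hdeath : MeasurableSet {ω | J n ω = 1} := hJmeas n (measurableSet_singleton 1)
    rw [hcompl, prob_compl_eq_one_sub hdeath, hJdist,
      ← ENNReal.ofReal_one, ← ENNReal.ofReal_sub _ hq0.le, hq, sub_sub_cancel]
  have hJU : IndepFun (fun ω => (J n ω : ℝ)) (U n) μ := hindep.indepFun Sum.inl_ne_inr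
  have hcast : ∀ k : ℕ, (fun ω => (J n ω : ℝ)) ⁻¹' {(k : ℝ)} = {ω | J n ω = k} := fun k => by
    ext; simp
  calc μ {ω | J n ω = 0 ∧ U n ω < q / p}
      = μ ((fun ω => (J n ω : ℝ)) ⁻¹' {((0 : ℕ) : ℝ)} ∩ U n ⁻¹' Set.Iio (q / p)) := by
        rw [hcast]; rfl
    _ = ENNReal.ofReal p * ENNReal.ofReal (q / p) := by
        rw [hJU.measure_inter_preimage_eq_mul _ _ (measurableSet_singleton _) measurableSet_Iio,
          hcast, hJ0, measure_preimage_Iio_of_map_eq_uniform (hUmeas n) (hUdist n)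
          ((div_le_one hp0).2 (by linarith))]
    _ = μ {ω | J n ω = 1} := by
        rw [← ENNReal.ofReal_mul hp0.le, mul_div_cancel₀ q hp0.ne', hJdist]

theorem integrable_increment [IsFiniteMeasure μ] (hJmeas : ∀ n, Measurable (J n))
    (hUmeas : ∀ n, Measurable (U n)) (n : ℕ) : Integrable (increment c J U n) μ :=
  ((integrable_const 1).indicator ((hJmeas n (measurableSet_singleton 0)).inter
    (hUmeas n measurableSet_Iio))).sub
    ((integrable_const 1).indicator (hJmeas n (measurableSet_singleton 1)))

theorem integral_increment_eq_zero [IsProbabilityMeasure μ]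
    (hp : 1 / 2 < p) (hp1 : p < 1) (hq : q = 1 - p)
    (hJmeas : ∀ n, Measurable (J n)) (hUmeas : ∀ n, Measurable (U n)) (hJval : ∀ n ω, J n ω ≤ 1)
    (hJdist : ∀ n, μ {ω | J n ω = 1} = ENNReal.ofReal q)
    (hUdist : ∀ n, Measure.map (U n) μ = volume.restrict (Set.Icc (0 : ℝ) 1))
    (hindep : iIndepFun (Sum.elim (fun n ω => (J n ω : ℝ)) U) μ) (n : ℕ) :
    μ[increment (q / p) J U n] = 0 := by
  have hbirth : MeasurableSet {ω | J n ω = 0 ∧ U n ω < q / p} :=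
    (hJmeas n (measurableSet_singleton 0)).inter (hUmeas n measurableSet_Iio)
  have hdeath : MeasurableSet {ω | J n ω = 1} := hJmeas n (measurableSet_singleton 1)
  rw [increment, integral_sub' ((integrable_const 1).indicator hbirth)
    ((integrable_const 1).indicator hdeath), integral_indicator_one hbirth,
    integral_indicator_one hdeath, measureReal_def, measureReal_def,
    measure_birth_eq_measure_death hp hp1 hq hJmeas hUmeas hJval hJdist hUdist hindep, sub_self]

abbrev noiseSigma (J : ℕ → Ω → ℕ) (U : ℕ → Ω → ℝ) (k : ℕ ⊕ ℕ) : MeasurableSpace Ω :=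
  MeasurableSpace.comap (Sum.elim (fun n ω => (J n ω : ℝ)) U k) inferInstance

theorem noiseSigma_le (hJmeas : ∀ n, Measurable (J n)) (hUmeas : ∀ n, Measurable (U n))
    (k : ℕ ⊕ ℕ) : noiseSigma J U k ≤ m0 := by
  rcases k with n | n
  · exact (measurable_from_top.comp (hJmeas n)).comap_le
  · exact (hUmeas n).comap_le

noncomputable def noiseFiltration (J : ℕ → Ω → ℕ) (U : ℕ → Ω → ℝ)
    (hJmeas : ∀ n, Measurable (J n)) (hUmeas : ∀ n, Measurable (U n)) : Filtration ℕ m0 :=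
  Filtration.generatedBefore (noiseSigma J U) (Sum.elim id id) (noiseSigma_le hJmeas hUmeas)

theorem stronglyMeasurable_increment (n : ℕ) :
    StronglyMeasurable[generatedAt (noiseSigma J U) (Sum.elim id id) n] (increment c J U n) := by
  have hJ := (comap_measurable (fun ω => (J n ω : ℝ))).mono
    (le_generatedAt (m := noiseSigma J U) (τ := Sum.elim id id) (i := Sum.inl n) rfl) le_rfl
  have hU := (comap_measurable (U n)).mono
    (le_generatedAt (m := noiseSigma J U) (τ := Sum.elim id id) (i := Sum.inr n) rfl) le_rfl
  have hbirth : {ω | J n ω = 0 ∧ U n ω < c}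
      = (fun ω => (J n ω : ℝ)) ⁻¹' {0} ∩ U n ⁻¹' Set.Iio c := by
    ext; simp
  have hdeath : {ω | J n ω = 1} = (fun ω => (J n ω : ℝ)) ⁻¹' {1} := by
    ext; simp
  rw [increment, hbirth, hdeath]
  exact (stronglyMeasurable_const.indicator
    ((hJ (measurableSet_singleton 0)).inter (hU measurableSet_Iio))).sub
    (stronglyMeasurable_const.indicator (hJ (measurableSet_singleton 1)))

theorem martingale_walk [IsProbabilityMeasure μ]
    (hp : 1 / 2 < p) (hp1 : p < 1) (hq : q = 1 - p)
    (hJmeas : ∀ n, Measurable (J n)) (hUmeas : ∀ n, Measurable (U n)) (hJval : ∀ n ω, J n ω ≤ 1)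
    (hJdist : ∀ n, μ {ω | J n ω = 1} = ENNReal.ofReal q)
    (hUdist : ∀ n, Measure.map (U n) μ = volume.restrict (Set.Icc (0 : ℝ) 1))
    (hindep : iIndepFun (Sum.elim (fun n ω => (J n ω : ℝ)) U) μ) :
    Martingale (walk (q / p) J U) (noiseFiltration J U hJmeas hUmeas) μ :=
  martingale_sum_range_of_indep (Filtration.generatedAt_le_generatedBefore_succ _)
    stronglyMeasurable_increment (Filtration.indep_generatedAt_generatedBefore _ hindep.iIndep)
    (integrable_increment hJmeas hUmeas)
    (integral_increment_eq_zero hp hp1 hq hJmeas hUmeas hJval hJdist hUdist hindep)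

theorem ae_frequently_eq_one (hq : 0 < q) (hJmeas : ∀ n, Measurable (J n))
    (hJdist : ∀ n, μ {ω | J n ω = 1} = ENNReal.ofReal q)
    (hindep : iIndepFun (Sum.elim (fun n ω => (J n ω : ℝ)) U) μ) :
    ∀ᵐ ω ∂μ, ∃ᶠ n in atTop, J n ω = 1 := by
  have hdeath : ∀ n, (fun ω => (J n ω : ℝ)) ⁻¹' {1} = {ω | J n ω = 1} := fun n => by ext; simp
  filter_upwards [(hindep.precomp Sum.inl_injective).ae_frequently_mem
    (fun n => measurable_from_top.comp (hJmeas n)) (measurableSet_singleton 1)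
    (ENNReal.ofReal_pos.2 hq).ne' (fun n => (hdeath n ▸ hJdist n).ge)] with ω hω
  simpa using hω

theorem ae_not_bddBelow_walk [IsProbabilityMeasure μ]
    (hp : 1 / 2 < p) (hp1 : p < 1) (hq : q = 1 - p)
    (hJmeas : ∀ n, Measurable (J n)) (hUmeas : ∀ n, Measurable (U n)) (hJval : ∀ n ω, J n ω ≤ 1)
    (hJdist : ∀ n, μ {ω | J n ω = 1} = ENNReal.ofReal q)
    (hUdist : ∀ n, Measure.map (U n) μ = volume.restrict (Set.Icc (0 : ℝ) 1))
    (hindep : iIndepFun (Sum.elim (fun n ω => (J n ω : ℝ)) U) μ) :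
    ∀ᵐ ω ∂μ, ¬BddBelow (Set.range fun n => walk (q / p) J U n ω) := by
  refine (martingale_walk hp hp1 hq hJmeas hUmeas hJval hJdist hUdist
    hindep).ae_not_bddBelow_of_frequently (R := 1) (ae_of_all _ fun ω n => ?_) one_pos ?_
  · simpa [walk_succ_sub_walk] using abs_increment_le_one n ω
  · filter_upwards [ae_frequently_eq_one (by linarith) hJmeas hJdist hindep] with ω hω
    exact hω.mono fun n hn => by simp [walk_succ_sub_walk, increment_of_eq_one hn]

end GMS

end Probability

theorem gms_L_recurrent_extinction_general
    {Ω : Type*} [MeasurableSpace Ω] (μ : Measure Ω) [IsProbabilityMeasure μ]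
    (p q : ℝ) (hp : 1 / 2 < p) (hp1 : p < 1) (hq : q = 1 - p)
    (J : ℕ → Ω → ℕ) (U : ℕ → Ω → ℝ)
    (hJmeas : ∀ n, Measurable (J n))
    (hUmeas : ∀ n, Measurable (U n))
    (hJval : ∀ n ω, J n ω ≤ 1)
    (hJdist : ∀ n, μ {ω | J n ω = 1} = ENNReal.ofReal q)
    (hUdist : ∀ n, Measure.map (U n) μ = volume.restrict (Set.Icc (0 : ℝ) 1))
    (hindep : iIndepFun
      (Sum.elim (fun n ω => (J n ω : ℝ)) U) μ)
    (L : ℕ → Ω → ℕ)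
    (hL : ∀ n ω, L (n + 1) ω =
      if J n ω = 0 ∧ U n ω < q / p then L n ω + 1
      else if J n ω = 1 ∧ 0 < L n ω then L n ω - 1 else L n ω)
    :
    ∀ᵐ ω ∂μ,
      {n : ℕ | L n ω = 0}.Infinite ∧
      ∀ m : ℕ, J m ω = 0 → U m ω < q / p → ∃ n > m, L n ω = 0 := by
  filter_upwards [GMS.ae_not_bddBelow_walk hp hp1 hq hJmeas hUmeas hJval hJdist hUdist hindep]
    with ω hω
  have hzeros : {n : ℕ | L n ω = 0}.Infinite :=
    Nat.frequently_atTop_iff_infinite.1 <| frequently_eq_zero_of_not_bddBelow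
      (fun n hn => by rw [GMS.cast_succ_sub_eq_increment hL hn, GMS.walk_succ_sub_walk]) hω
  refine ⟨hzeros, fun m _ _ => ?_⟩
  obtain ⟨n, hn, hmn⟩ := hzeros.exists_gt m
  exact ⟨n, hmn, hn⟩

/-- **GMS model, recurrence of `L` and extinction of subcritical species.**
Almost surely `L_n = 0` infinitely often; consequently every species born with
fitness below the critical value `f_c = q/p` eventually becomes extinct. -/
theorem gms_L_recurrent_extinction
    {Ω : Type*} [MeasurableSpace Ω] (μ : Measure Ω) [IsProbabilityMeasure μ]
    (p q : ℝ) (hp : 1 / 2 < p) (hp1 : p < 1) (hq : q = 1 - p)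
    (J : ℕ → Ω → ℕ) (U : ℕ → Ω → ℝ)
    (hJmeas : ∀ n, Measurable (J n))
    (hUmeas : ∀ n, Measurable (U n))
    (hJval : ∀ n ω, J n ω ≤ 1)
    (hJdist : ∀ n, μ {ω | J n ω = 1} = ENNReal.ofReal q)
    (hUdist : ∀ n, Measure.map (U n) μ = volume.restrict (Set.Icc (0 : ℝ) 1))
    (hindep : iIndepFun
      (Sum.elim (fun n ω => (J n ω : ℝ)) U) μ)
    (L : ℕ → Ω → ℕ)
    (hL0 : ∀ ω, L 0 ω = 0)
    (hL : ∀ n ω, L (n + 1) ω =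
      if J n ω = 0 ∧ U n ω < q / p then L n ω + 1
      else if J n ω = 1 ∧ 0 < L n ω then L n ω - 1 else L n ω)
    :
    ∀ᵐ ω ∂μ,
      {n : ℕ | L n ω = 0}.Infinite ∧
      ∀ m : ℕ, J m ω = 0 → U m ω < q / p → ∃ n > m, L n ω = 0 :=
  gms_L_recurrent_extinction_general μ p q hp hp1 hq J U hJmeas hUmeas hJval hJdist hUdist hindep L
    hL
end

section
/- For every ε > 0, almost surely 0 ≤ limsup_{n→∞} (B_n − R_n)/n^{1/2+ε} ≤ 2/q. -/
/-!
Let `S` be the walk that steps `+1` at each birth of a species of fitness below `f_c` and `-1` at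
each death event (`J = 1`). Its steps are independent, bounded and centred, since
`P(J = 0, U < f_c) = p f_c = q = P(J = 1)`, and `L` is `S` reflected at `0`, so that
`L_n - S_n = max_{k ≤ n} (-S_k)`. The difference `B_n - R_n` counts the dead species of fitness
`≥ f_c`; one of them can only die when `L = 0`, i.e. when the reflection pushes, hence
`0 ≤ B_n - R_n ≤ L_n - S_n`. Hoeffding's inequality and Borel–Cantelli give
`max_{k ≤ n} (-S_k) = o(n^{1/2+ε})` almost surely, so `(B_n - R_n) / n^{1/2+ε} → 0` and the
limsup is `0`.
-/

open MeasureTheory ProbabilityTheory Filter Finset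
open scoped NNReal Topology

lemma summable_exp_neg_mul_rpow {a b : ℝ} (ha : 0 < a) (hb : 0 < b) :
    Summable fun n : ℕ => Real.exp (-(a * (n : ℝ) ^ b)) := by
  have hlim : Tendsto (fun n : ℕ => ((n : ℝ) ^ b) ^ (2 / b) * Real.exp (-a * (n : ℝ) ^ b))
      atTop (𝓝 0) :=
    (tendsto_rpow_mul_exp_neg_mul_atTop_nhds_zero (2 / b) a ha).comp
      ((tendsto_rpow_atTop hb).comp tendsto_natCast_atTop_atTop)
  refine .of_norm_bounded_eventually_nat (Real.summable_one_div_nat_pow.mpr one_lt_two) ?_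
  filter_upwards [hlim.eventually (eventually_le_nhds one_pos), eventually_gt_atTop 0]
    with n hn hn0
  have hpow : ((n : ℝ) ^ b) ^ (2 / b) = (n : ℝ) ^ 2 := by
    rw [← Real.rpow_mul (Nat.cast_nonneg n), mul_div_cancel₀ _ hb.ne']
    norm_cast
  rw [hpow, neg_mul] at hn
  rw [Real.norm_of_nonneg (Real.exp_nonneg _), le_div_iff₀ (by positivity)]
  linarith

lemma eventually_forall_le_mul_of_eventually_le {a g : ℕ → ℝ} (hg : Monotone g)
    (hg_top : Tendsto g atTop atTop) (ha : ∀ δ > 0, ∀ᶠ n in atTop, a n ≤ δ * g n) :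
    ∀ δ > 0, ∀ᶠ n in atTop, ∀ k ≤ n, a k ≤ δ * g n := by
  intro δ hδ
  obtain ⟨N, hN⟩ := eventually_atTop.1 (ha (δ / 2) (half_pos hδ))
  have hC : ∀ k < N, a k ≤ ∑ i ∈ range N, |a i| := fun k hk =>
    (le_abs_self _).trans (single_le_sum (fun i _ => abs_nonneg (a i)) (mem_range.2 hk))
  filter_upwards [hg_top.eventually_ge_atTop ((∑ i ∈ range N, |a i|) / (δ / 2)),
    hg_top.eventually_ge_atTop 0] with n hCn hgn k hk
  rw [div_le_iff₀' (half_pos hδ)] at hCn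
  rcases lt_or_ge k N with hkN | hkN
  · nlinarith [hC k hkN, mul_nonneg hδ.le hgn]
  · nlinarith [hN k hkN, hg hk]

lemma tendsto_div_rpow_nhds_zero_of_exists_le {d a : ℕ → ℝ} {r : ℝ} (hr : 0 < r)
    (hd : ∀ n, 0 ≤ d n) (hda : ∀ n, ∃ k ≤ n, d n ≤ a k)
    (ha : ∀ δ > 0, ∀ᶠ n in atTop, a n ≤ δ * (n : ℝ) ^ r) :
    Tendsto (fun n => d n / (n : ℝ) ^ r) atTop (𝓝 0) := by
  have hmono : Monotone fun n : ℕ => (n : ℝ) ^ r := fun m n hmn =>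
    Real.rpow_le_rpow (Nat.cast_nonneg m) (Nat.cast_le.2 hmn) hr.le
  have htop : Tendsto (fun n : ℕ => (n : ℝ) ^ r) atTop atTop :=
    (tendsto_rpow_atTop hr).comp tendsto_natCast_atTop_atTop
  refine tendsto_order.2 ⟨fun b hb => .of_forall fun n =>
    hb.trans_le (div_nonneg (hd n) (by positivity)), fun b hb => ?_⟩
  filter_upwards [htop.eventually_gt_atTop 0,
    eventually_forall_le_mul_of_eventually_le hmono htop ha (b / 2) (half_pos hb)] with n hn hmax
  obtain ⟨k, hk, hdk⟩ := hda n
  rw [div_lt_iff₀ hn]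
  nlinarith [hmax k hk]

lemma ProbabilityTheory.iIndepFun.prodMk_sumElim {Ω ι β : Type*} [MeasurableSpace Ω]
    [MeasurableSpace β] {μ : Measure Ω} {f g : ι → Ω → β} (hf : ∀ i, Measurable (f i))
    (hg : ∀ i, Measurable (g i)) (h : iIndepFun (Sum.elim f g) μ) :
    iIndepFun (fun i ω => (f i ω, g i ω)) μ := by
  have hrect : ∀ (s : Finset ι) (A B : ι → Set β), (∀ i ∈ s, MeasurableSet (A i)) →
      (∀ i ∈ s, MeasurableSet (B i)) →
      μ (⋂ i ∈ s, (f i ⁻¹' A i ∩ g i ⁻¹' B i))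
        = (∏ i ∈ s, μ (f i ⁻¹' A i)) * ∏ i ∈ s, μ (g i ⁻¹' B i) := by
    intro s A B hA hB
    have key := h.measure_inter_preimage_eq_mul (s.disjSum s) (sets := Sum.elim A B)
      (by rintro (i | i) hi <;> simp only [inl_mem_disjSum, inr_mem_disjSum] at hi
          exacts [hA i hi, hB i hi])
    simp only [prod_disjSum, Sum.elim_inl, Sum.elim_inr] at key
    rw [← key]
    congr 1
    ext ω
    simp [mem_disjSum, forall_and]
  rw [iIndepFun_iff_iIndep]
  refine iIndepSets.iIndep (fun i => ((hf i).prodMk (hg i)).comap_le)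
    (fun i => Set.preimage (fun ω => (f i ω, g i ω)) ''
      Set.image2 (· ×ˢ ·) {A : Set β | MeasurableSet A} {B : Set β | MeasurableSet B})
    (fun i => isPiSystem_prod.comap _)
    (fun i => by rw [← MeasurableSpace.comap_generateFrom, generateFrom_prod]) ?_
  rw [iIndepSets_iff]
  intro s t ht
  have hrect_mem : ∀ i ∈ s, ∃ A B, MeasurableSet A ∧ MeasurableSet B ∧
      f i ⁻¹' A ∩ g i ⁻¹' B = t i := by
    intro i hi
    obtain ⟨_, ⟨A, hA, B, hB, rfl⟩, hAB⟩ := ht i hi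
    exact ⟨A, B, hA, hB, hAB⟩
  choose! A B hA hB hAB using hrect_mem
  calc μ (⋂ i ∈ s, t i) = μ (⋂ i ∈ s, (f i ⁻¹' A i ∩ g i ⁻¹' B i)) := by
        rw [Set.iInter₂_congr fun i hi => (hAB i hi).symm]
    _ = ∏ i ∈ s, μ (f i ⁻¹' A i ∩ g i ⁻¹' B i) := by
        rw [hrect s A B hA hB, ← prod_mul_distrib]
        refine prod_congr rfl fun i hi => ?_
        simpa using (hrect {i} A B (by simpa using hA i hi) (by simpa using hB i hi)).symm
    _ = ∏ i ∈ s, μ (t i) := prod_congr rfl fun i hi => by rw [hAB i hi]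

lemma measure_sum_range_ge_mul_rpow_le {Ω : Type*} [MeasurableSpace Ω] {μ : Measure Ω}
    {X : ℕ → Ω → ℝ} {c : ℝ≥0} (h_indep : iIndepFun X μ)
    (h_subG : ∀ i, HasSubgaussianMGF (X i) c μ) {δ ε : ℝ} (hδ : 0 ≤ δ) (hε : 0 < ε) (n : ℕ) :
    μ {ω | δ * (n : ℝ) ^ (1 / 2 + ε) ≤ ∑ i ∈ range n, X i ω}
      ≤ ENNReal.ofReal (Real.exp (-(δ ^ 2 / (2 * c) * (n : ℝ) ^ (2 * ε)))) := by
  have := h_indep.isProbabilityMeasure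
  rw [← ofReal_measureReal]
  refine ENNReal.ofReal_le_ofReal ((HasSubgaussianMGF.measure_sum_range_ge_le_of_iIndepFun
    h_indep (fun i _ => h_subG i) (by positivity)).trans_eq ?_)
  rw [neg_div]
  congr 2
  rcases n.eq_zero_or_pos with rfl | hn
  · simp [Real.zero_rpow (by positivity : 2 * ε ≠ 0)]
  have hn' : (0 : ℝ) < n := by exact_mod_cast hn
  rw [mul_pow, ← Real.rpow_natCast ((n : ℝ) ^ (1 / 2 + ε)), ← Real.rpow_mul hn'.le,
    show (1 / 2 + ε) * ((2 : ℕ) : ℝ) = 1 + 2 * ε by push_cast; ring, Real.rpow_add hn',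
    Real.rpow_one]
  field_simp

theorem ae_eventually_sum_range_lt_mul_rpow {Ω : Type*} [MeasurableSpace Ω] {μ : Measure Ω}
    {X : ℕ → Ω → ℝ} {c : ℝ≥0} (hc : 0 < c) (h_indep : iIndepFun X μ)
    (h_subG : ∀ i, HasSubgaussianMGF (X i) c μ) {ε : ℝ} (hε : 0 < ε) :
    ∀ᵐ ω ∂μ, ∀ δ > 0, ∀ᶠ n in atTop, ∑ i ∈ range n, X i ω < δ * (n : ℝ) ^ (1 / 2 + ε) := by
  have h_fixed : ∀ δ > 0, ∀ᵐ ω ∂μ, ∀ᶠ n in atTop,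
      ∑ i ∈ range n, X i ω < δ * (n : ℝ) ^ (1 / 2 + ε) := by
    intro δ hδ
    have hsum : ∑' n : ℕ, μ {ω | δ * (n : ℝ) ^ (1 / 2 + ε) ≤ ∑ i ∈ range n, X i ω} ≠ ⊤ := by
      refine ne_top_of_le_ne_top ?_ (ENNReal.tsum_le_tsum
        (measure_sum_range_ge_mul_rpow_le h_indep h_subG hδ.le hε))
      rw [← ENNReal.ofReal_tsum_of_nonneg (fun n => (Real.exp_pos _).le)
        (summable_exp_neg_mul_rpow (by positivity) (by positivity))]
      exact ENNReal.ofReal_ne_top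
    filter_upwards [ae_eventually_notMem hsum] with ω hω
    exact hω.mono fun n hn => not_le.1 hn
  filter_upwards [ae_all_iff.2 fun m : ℕ => h_fixed (1 / (m + 1)) Nat.one_div_pos_of_nat]
    with ω hω δ hδ
  obtain ⟨m, hm⟩ := exists_nat_one_div_lt hδ
  filter_upwards [hω m] with n hn
  exact hn.trans_le (mul_le_mul_of_nonneg_right hm.le (by positivity))

lemma measureReal_preimage_Iio_of_map_eq_restrict_Icc {Ω : Type*} [MeasurableSpace Ω]
    {μ : Measure Ω} {v : Ω → ℝ} (hv : Measurable v)
    (hlaw : μ.map v = volume.restrict (Set.Icc 0 1)) {c : ℝ} (hc0 : 0 ≤ c) (hc1 : c ≤ 1) :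
    μ.real (v ⁻¹' Set.Iio c) = c := by
  have hIco : Set.Iio c ∩ Set.Icc 0 1 = Set.Ico 0 c :=
    Set.ext fun x => ⟨fun h => ⟨h.2.1, h.1⟩, fun h => ⟨h.2, h.1, h.2.le.trans hc1⟩⟩
  rw [← map_measureReal_apply hv measurableSet_Iio, hlaw,
    measureReal_restrict_apply measurableSet_Iio, hIco, Real.volume_real_Ico_of_le hc0, sub_zero]

namespace GMS

/-- The step of the walk of species of fitness below `c` when the step indicator is `a` (`J`) and
the new fitness is `v` (`U`): `+1` for a birth below `c`, `-1` for a death event. -/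
noncomputable def lowStep (c a v : ℝ) : ℤ := if a = 0 ∧ v < c then 1 else if a = 1 then -1 else 0

noncomputable def lowWalk (c : ℝ) (j : ℕ → ℕ) (u : ℕ → ℝ) (n : ℕ) : ℤ :=
  ∑ i ∈ range n, lowStep c (j i) (u i)

section Path

variable {c : ℝ} {j : ℕ → ℕ} {u : ℕ → ℝ} {x l : ℕ → ℕ}

lemma lowWalk_succ (n : ℕ) :
    lowWalk c j u (n + 1) = lowWalk c j u n
      + if j n = 0 ∧ u n < c then 1 else if j n = 1 then -1 else 0 := by
  simp [lowWalk, lowStep, sum_range_succ]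

lemma low_le_size (hj : ∀ n, j n ≤ 1)
    (hx0 : x 0 = 0) (hx : ∀ n, x (n + 1) = x n + (1 - j n) - (if x n = 0 then 0 else j n))
    (hl0 : l 0 = 0) (hl : ∀ n, l (n + 1) =
      if j n = 0 ∧ u n < c then l n + 1 else if j n = 1 ∧ 0 < l n then l n - 1 else l n)
    (n : ℕ) : l n ≤ x n := by
  induction n with
  | zero => rw [hl0, hx0]
  | succ n ih =>
    rw [hx n, hl n]
    have := hj n
    split_ifs <;> omega

/-- `l` is the walk `lowWalk` reflected at `0`: `l - lowWalk` only moves when a death event finds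
`l = 0`, and then it equals `-lowWalk`. -/
lemma exists_sub_lowWalk_le (hj : ∀ n, j n ≤ 1) (hl0 : l 0 = 0) (hl : ∀ n, l (n + 1) =
      if j n = 0 ∧ u n < c then l n + 1 else if j n = 1 ∧ 0 < l n then l n - 1 else l n)
    (n : ℕ) : ∃ k ≤ n, (l n : ℤ) - lowWalk c j u n ≤ -lowWalk c j u k := by
  induction n with
  | zero => exact ⟨0, le_rfl, by simp [hl0, lowWalk]⟩
  | succ n ih =>
    obtain ⟨k, hk, hlk⟩ := ih
    have := hj n
    by_cases hpush : j n = 1 ∧ l n = 0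
    · refine ⟨n + 1, le_rfl, ?_⟩
      rw [hl n, lowWalk_succ]
      split_ifs <;> omega
    · refine ⟨k, hk.trans n.le_succ, ?_⟩
      rw [hl n, lowWalk_succ]
      split_ifs <;> omega

/-- `#{i ∈ range n | j i = 0 ∧ c ≤ u i} - (x n - l n)` counts the dead species of fitness `≥ c`;
it grows only when a death event finds `l = 0`, which is exactly when `l - lowWalk` grows. -/
lemma highDeaths_nonneg_and_le_sub_lowWalk (hj : ∀ n, j n ≤ 1)
    (hx0 : x 0 = 0) (hx : ∀ n, x (n + 1) = x n + (1 - j n) - (if x n = 0 then 0 else j n))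
    (hl0 : l 0 = 0) (hl : ∀ n, l (n + 1) =
      if j n = 0 ∧ u n < c then l n + 1 else if j n = 1 ∧ 0 < l n then l n - 1 else l n)
    (n : ℕ) :
    0 ≤ (#{i ∈ range n | j i = 0 ∧ c ≤ u i} : ℤ) - (x n - l n) ∧
      (#{i ∈ range n | j i = 0 ∧ c ≤ u i} : ℤ) - (x n - l n) ≤ l n - lowWalk c j u n := by
  induction n with
  | zero => simp [hx0, hl0, lowWalk]
  | succ n ih =>
    have hlx := low_le_size hj hx0 hx hl0 hl n
    rw [← Nat.count_eq_card_filter_range] at ih ⊢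
    rw [Nat.count_succ, hx n, hl n, lowWalk_succ]
    have := hj n
    split_ifs <;> grind

lemma highDeaths_nonneg_and_exists_le (hj : ∀ n, j n ≤ 1)
    (hx0 : x 0 = 0) (hx : ∀ n, x (n + 1) = x n + (1 - j n) - (if x n = 0 then 0 else j n))
    (hl0 : l 0 = 0) (hl : ∀ n, l (n + 1) =
      if j n = 0 ∧ u n < c then l n + 1 else if j n = 1 ∧ 0 < l n then l n - 1 else l n)
    (n : ℕ) :
    0 ≤ (#{i ∈ range n | j i = 0 ∧ c ≤ u i} : ℤ) - (x n - l n) ∧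
      ∃ k ≤ n, (#{i ∈ range n | j i = 0 ∧ c ≤ u i} : ℤ) - (x n - l n) ≤ -lowWalk c j u k := by
  obtain ⟨hnonneg, hle⟩ := highDeaths_nonneg_and_le_sub_lowWalk hj hx0 hx hl0 hl n
  obtain ⟨k, hk, hlk⟩ := exists_sub_lowWalk_le hj hl0 hl n
  exact ⟨hnonneg, k, hk, hle.trans hlk⟩

end Path

lemma measurable_lowStep (c : ℝ) : Measurable fun z : ℝ × ℝ => (lowStep c z.1 z.2 : ℝ) := by
  simp only [lowStep, apply_ite (Int.cast : ℤ → ℝ), Int.cast_one, Int.cast_neg, Int.cast_zero]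
  refine Measurable.ite ?_ measurable_const (Measurable.ite ?_ measurable_const measurable_const)
  · exact (measurable_fst (measurableSet_singleton 0)).inter (measurable_snd measurableSet_Iio)
  · exact measurable_fst (measurableSet_singleton 1)

lemma lowStep_mem_Icc (c a v : ℝ) : (lowStep c a v : ℝ) ∈ Set.Icc (-1) 1 := by
  unfold lowStep
  split_ifs <;> norm_num

lemma integral_lowStep {Ω : Type*} [MeasurableSpace Ω] {μ : Measure Ω} [IsFiniteMeasure μ]
    {a v : Ω → ℝ} (ha : Measurable a) (hv : Measurable v) (c : ℝ) :
    ∫ ω, (lowStep c (a ω) (v ω) : ℝ) ∂μ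
      = μ.real {ω | a ω = 0 ∧ v ω < c} - μ.real {ω | a ω = 1} := by
  have hA : MeasurableSet {ω | a ω = 0 ∧ v ω < c} :=
    (ha (measurableSet_singleton 0)).inter (hv measurableSet_Iio)
  have hB : MeasurableSet {ω | a ω = 1} := ha (measurableSet_singleton 1)
  have hstep : (fun ω => (lowStep c (a ω) (v ω) : ℝ))
      = fun ω => {ω | a ω = 0 ∧ v ω < c}.indicator 1 ω - {ω | a ω = 1}.indicator 1 ω := by
    ext ω
    by_cases h0 : a ω = 0 ∧ v ω < c
    · simp [lowStep, h0]
    · by_cases h1 : a ω = 1 <;> simp [lowStep, h0, h1]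
  rw [hstep, integral_sub ((integrable_const 1).indicator hA) ((integrable_const 1).indicator hB),
    integral_indicator_one hA, integral_indicator_one hB]

theorem measureReal_lowBirth_eq_measureReal_death {Ω : Type*} [MeasurableSpace Ω]
    {μ : Measure Ω} [IsProbabilityMeasure μ] {p q : ℝ} (hp : 1 / 2 < p) (hp1 : p < 1)
    (hq : q = 1 - p) {a : Ω → ℕ} {v : Ω → ℝ} (ha : Measurable a) (hv : Measurable v)
    (ha_le : ∀ ω, a ω ≤ 1) (ha_one : μ {ω | a ω = 1} = ENNReal.ofReal q)
    (hv_law : μ.map v = volume.restrict (Set.Icc 0 1))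
    (hav : IndepFun (fun ω => (a ω : ℝ)) v μ) :
    μ.real {ω | (a ω : ℝ) = 0 ∧ v ω < q / p} = μ.real {ω | (a ω : ℝ) = 1} := by
  have hp0 : 0 < p := by linarith
  have ha' : Measurable fun ω => (a ω : ℝ) := measurable_from_nat.comp ha
  have hone : μ.real {ω | (a ω : ℝ) = 1} = q := by
    simp only [Nat.cast_eq_one]
    rw [measureReal_def, ha_one, ENNReal.toReal_ofReal (by linarith)]
  have hzero : μ.real ((fun ω => (a ω : ℝ)) ⁻¹' {0}) = p := by
    have hcompl : (fun ω => (a ω : ℝ)) ⁻¹' {0} = {ω | (a ω : ℝ) = 1}ᶜ := by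
      ext ω
      have := ha_le ω
      simp only [Set.mem_preimage, Set.mem_singleton_iff, Nat.cast_eq_zero, Nat.cast_eq_one,
        Set.mem_compl_iff, Set.mem_ofPred_eq]
      omega
    rw [hcompl, measureReal_compl (s := {ω | (a ω : ℝ) = 1}) (ha' (measurableSet_singleton 1)),
      probReal_univ, hone, hq]
    ring
  have hbelow : μ.real (v ⁻¹' Set.Iio (q / p)) = q / p :=
    measureReal_preimage_Iio_of_map_eq_restrict_Icc hv hv_law (div_nonneg (by linarith) hp0.le)
      ((div_le_one hp0).2 (by linarith))
  calc μ.real {ω | (a ω : ℝ) = 0 ∧ v ω < q / p}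
      = μ.real ((fun ω => (a ω : ℝ)) ⁻¹' {0}) * μ.real (v ⁻¹' Set.Iio (q / p)) := by
        simp only [measureReal_def]
        rw [← ENNReal.toReal_mul, ← hav.measure_inter_preimage_eq_mul _ _
          (measurableSet_singleton 0) measurableSet_Iio]
        rfl
    _ = μ.real {ω | (a ω : ℝ) = 1} := by
        rw [hzero, hbelow, hone]
        field_simp

theorem ae_eventually_neg_lowWalk_lt {Ω : Type*} [MeasurableSpace Ω] {μ : Measure Ω}
    [IsProbabilityMeasure μ] {c : ℝ} {J : ℕ → Ω → ℕ} {U : ℕ → Ω → ℝ}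
    (hJ : ∀ i, Measurable (J i)) (hU : ∀ i, Measurable (U i))
    (hindep : iIndepFun (Sum.elim (fun n ω => (J n ω : ℝ)) U) μ)
    (hmean : ∀ i, μ.real {ω | (J i ω : ℝ) = 0 ∧ U i ω < c} = μ.real {ω | (J i ω : ℝ) = 1})
    {ε : ℝ} (hε : 0 < ε) :
    ∀ᵐ ω ∂μ, ∀ δ > 0, ∀ᶠ n in atTop,
      -(lowWalk c (J · ω) (U · ω) n : ℝ) < δ * (n : ℝ) ^ (1 / 2 + ε) := by
  have hJr : ∀ i, Measurable fun ω => (J i ω : ℝ) := fun i => measurable_from_nat.comp (hJ i)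
  have h_indep : iIndepFun (fun i ω => -(lowStep c (J i ω) (U i ω) : ℝ)) μ :=
    (hindep.prodMk_sumElim hJr hU).comp (fun _ z => -(lowStep c z.1 z.2 : ℝ))
      fun _ => (measurable_lowStep c).neg
  have h_subG : ∀ i, HasSubgaussianMGF (fun ω => -(lowStep c (J i ω) (U i ω) : ℝ))
      ((‖(1 : ℝ) - -1‖₊ / 2) ^ 2) μ := fun i =>
    (hasSubgaussianMGF_of_mem_Icc_of_integral_eq_zero
      (X := fun ω => (lowStep c (J i ω) (U i ω) : ℝ))
      ((measurable_lowStep c).comp ((hJr i).prodMk (hU i))).aemeasurable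
      (ae_of_all _ fun ω => lowStep_mem_Icc c _ _)
      (by rw [integral_lowStep (hJr i) (hU i), hmean, sub_self])).neg
  filter_upwards [ae_eventually_sum_range_lt_mul_rpow (by norm_num) h_indep h_subG hε]
    with ω hω δ hδ
  simpa [lowWalk] using hω δ hδ

end GMS

/-- **GMS model (Guiol–Machado–Schinazi bound).**
For every `ε > 0`, almost surely `0 ≤ limsup (B_n − R_n)/n^{1/2+ε} ≤ 2/q`. -/
theorem gms_limsup_polynomial_bound
    {Ω : Type*} [MeasurableSpace Ω] (μ : Measure Ω) [IsProbabilityMeasure μ]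
    (p q : ℝ) (hp : 1 / 2 < p) (hp1 : p < 1) (hq : q = 1 - p)
    (J : ℕ → Ω → ℕ) (U : ℕ → Ω → ℝ)
    (hJmeas : ∀ n, Measurable (J n))
    (hUmeas : ∀ n, Measurable (U n))
    (hJval : ∀ n ω, J n ω ≤ 1)
    (hJdist : ∀ n, μ {ω | J n ω = 1} = ENNReal.ofReal q)
    (hUdist : ∀ n, Measure.map (U n) μ = volume.restrict (Set.Icc (0 : ℝ) 1))
    (hindep : iIndepFun
      (Sum.elim (fun n ω => (J n ω : ℝ)) U) μ)
    (X L : ℕ → Ω → ℕ)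
    (hX0 : ∀ ω, X 0 ω = 0)
    (hX : ∀ n ω, X (n + 1) ω = X n ω + (1 - J n ω) - (if X n ω = 0 then 0 else J n ω))
    (hL0 : ∀ ω, L 0 ω = 0)
    (hL : ∀ n ω, L (n + 1) ω =
      if J n ω = 0 ∧ U n ω < q / p then L n ω + 1
      else if J n ω = 1 ∧ 0 < L n ω then L n ω - 1 else L n ω)
    (B : ℕ → Ω → ℕ)
    (hB : ∀ n ω, B n ω =
      ((Finset.range n).filter (fun i => J i ω = 0 ∧ q / p ≤ U i ω)).card)
    (R : ℕ → Ω → ℤ)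
    (hR : ∀ n ω, R n ω = (X n ω : ℤ) - (L n ω : ℤ)) :
    ∀ ε : ℝ, 0 < ε →
      ∀ᵐ ω ∂μ,
        0 ≤ Filter.limsup
            (fun n : ℕ => ((B n ω : ℝ) - (R n ω : ℝ)) / (n : ℝ) ^ ((1 : ℝ) / 2 + ε))
            Filter.atTop ∧
        Filter.limsup
            (fun n : ℕ => ((B n ω : ℝ) - (R n ω : ℝ)) / (n : ℝ) ^ ((1 : ℝ) / 2 + ε))
            Filter.atTop ≤ 2 / q := by
  intro ε hε
  have hq0 : 0 < q := by linarith
  have hmean := fun i => GMS.measureReal_lowBirth_eq_measureReal_death hp hp1 hq (hJmeas i)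
    (hUmeas i) (hJval i) (hJdist i) (hUdist i) (hindep.indepFun Sum.inl_ne_inr)
  filter_upwards [GMS.ae_eventually_neg_lowWalk_lt hJmeas hUmeas hindep hmean hε] with ω hω
  have hBR : ∀ n, (B n ω : ℝ) - R n ω
      = (((#{i ∈ range n | J i ω = 0 ∧ q / p ≤ U i ω} : ℤ) - (X n ω - L n ω) : ℤ) : ℝ) := by
    intro n
    rw [hB, hR]
    push_cast
    ring
  have hpath := GMS.highDeaths_nonneg_and_exists_le (u := (U · ω)) (x := (X · ω))
    (l := (L · ω)) (fun n => hJval n ω) (hX0 ω) (fun n => hX n ω) (hL0 ω) (fun n => hL n ω)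
  have hlim : Tendsto (fun n : ℕ => ((B n ω : ℝ) - R n ω) / (n : ℝ) ^ ((1 : ℝ) / 2 + ε))
      atTop (𝓝 0) := by
    refine tendsto_div_rpow_nhds_zero_of_exists_le (by positivity) (fun n => ?_) (fun n => ?_)
      fun δ hδ => (hω δ hδ).mono fun _ => le_of_lt
    · rw [hBR]
      exact_mod_cast (hpath n).1
    · obtain ⟨k, hk, hDk⟩ := (hpath n).2
      exact ⟨k, hk, by rw [hBR]; exact_mod_cast hDk⟩
  rw [hlim.limsup_eq]
  exact ⟨le_rfl, by positivity⟩
end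

section
/- For every n ≥ 0 one has, pointwise on the sample space, B_n − R_n = η_n − Σ_{i=0}^{n−1} J_i·1{X_i = 0}, where η_n = Σ_{i=0}^{n−1} J_i·1{L_i = 0}. -/
/-!
Every step changes `B − R` by `J_n·1{L_n = 0} − J_n·1{X_n = 0}`: a birth of fitness `≥ f_c`
raises `B` and `R` together, a birth of fitness `< f_c` raises `X` and `L` together, and a death
lowers `X` and `L` together unless `L_n = 0`, when it lowers `R` instead, or `X_n = 0`, when it
does not happen. Summing these increments telescopes.
-/

open MeasureTheory ProbabilityTheory Filter Finset

lemma natCast_reflected_step (x j : ℕ) (hj : j ≤ 1) :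
    ((x + (1 - j) - (if x = 0 then 0 else j) : ℕ) : ℤ)
      = x + 1 - 2 * j + j * (if x = 0 then 1 else 0) := by
  interval_cases j <;> by_cases hx : x = 0 <;> simp [hx]
  omega

lemma natCast_lowFitness_step (l j : ℕ) (born : Prop) [Decidable born] (hj : j ≤ 1) :
    (((if j = 0 ∧ born then l + 1 else if j = 1 ∧ 0 < l then l - 1 else l) : ℕ) : ℤ)
      = l + (if j = 0 ∧ born then 1 else 0) - j + j * (if l = 0 then 1 else 0) := by
  interval_cases j <;> by_cases hl : l = 0 <;> by_cases born <;> simp [*] <;> omega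

lemma one_sub_sub_ite_born (j : ℕ) (born : Prop) [Decidable born] (hj : j ≤ 1) :
    (1 - j : ℤ) - (if j = 0 ∧ born then 1 else 0) = if j = 0 ∧ ¬born then 1 else 0 := by
  interval_cases j <;> by_cases born <;> simp [*]

theorem gms_B_sub_R_decomposition_general
    {Ω : Type*}
    (p q : ℝ)
    (J : ℕ → Ω → ℕ) (U : ℕ → Ω → ℝ)
    (hJval : ∀ n ω, J n ω ≤ 1)
    (X L : ℕ → Ω → ℕ)
    (hX0 : ∀ ω, X 0 ω = 0)
    (hX : ∀ n ω, X (n + 1) ω = X n ω + (1 - J n ω) - (if X n ω = 0 then 0 else J n ω))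
    (hL0 : ∀ ω, L 0 ω = 0)
    (hL : ∀ n ω, L (n + 1) ω =
      if J n ω = 0 ∧ U n ω < q / p then L n ω + 1
      else if J n ω = 1 ∧ 0 < L n ω then L n ω - 1 else L n ω)
    (B : ℕ → Ω → ℕ)
    (hB : ∀ n ω, B n ω =
      ((Finset.range n).filter (fun i => J i ω = 0 ∧ q / p ≤ U i ω)).card)
    (R : ℕ → Ω → ℤ)
    (hR : ∀ n ω, R n ω = (X n ω : ℤ) - (L n ω : ℤ)) :
    ∀ n : ℕ, ∀ ω : Ω,
      (B n ω : ℤ) - R n ω =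
        (∑ i ∈ Finset.range n, (J i ω : ℤ) * (if L i ω = 0 then 1 else 0)) -
        (∑ i ∈ Finset.range n, (J i ω : ℤ) * (if X i ω = 0 then 1 else 0)) := by
  intro n ω
  have hB_sum : (B n ω : ℤ) =
      ∑ i ∈ range n, if J i ω = 0 ∧ ¬U i ω < q / p then 1 else 0 := by
    simp_rw [hB, card_filter, not_lt]
    push_cast
    rfl
  have hR_sum : R n ω = ∑ i ∈ range n, (R (i + 1) ω - R i ω) := by
    rw [sum_range_sub (R · ω), hR 0, hX0, hL0]
    simp
  have hR_step : ∀ i, R (i + 1) ω - R i ω =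
      (if J i ω = 0 ∧ ¬U i ω < q / p then 1 else 0)
        + J i ω * (if X i ω = 0 then 1 else 0) - J i ω * (if L i ω = 0 then 1 else 0) := by
    intro i
    rw [hR, hR, hX, hL, natCast_reflected_step _ _ (hJval i ω),
      natCast_lowFitness_step _ _ _ (hJval i ω),
      ← one_sub_sub_ite_born _ (U i ω < q / p) (hJval i ω)]
    ring
  rw [hB_sum, hR_sum, ← sum_sub_distrib, ← sum_sub_distrib]
  refine sum_congr rfl fun i _ => ?_
  rw [hR_step]
  ring

/-- **GMS model, pointwise decomposition of `B_n − R_n`.**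
`B_n − R_n = η_n − Σ_{i<n} J_i·1{X_i = 0}` with `η_n = Σ_{i<n} J_i·1{L_i = 0}`. -/
theorem gms_B_sub_R_decomposition
    {Ω : Type*} [MeasurableSpace Ω] (μ : Measure Ω) [IsProbabilityMeasure μ]
    (p q : ℝ) (hp : 1 / 2 < p) (hp1 : p < 1) (hq : q = 1 - p)
    (J : ℕ → Ω → ℕ) (U : ℕ → Ω → ℝ)
    (hJmeas : ∀ n, Measurable (J n))
    (hUmeas : ∀ n, Measurable (U n))
    (hJval : ∀ n ω, J n ω ≤ 1)
    (hJdist : ∀ n, μ {ω | J n ω = 1} = ENNReal.ofReal q)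
    (hUdist : ∀ n, Measure.map (U n) μ = volume.restrict (Set.Icc (0 : ℝ) 1))
    (hindep : iIndepFun
      (Sum.elim (fun n ω => (J n ω : ℝ)) U) μ)
    (X L : ℕ → Ω → ℕ)
    (hX0 : ∀ ω, X 0 ω = 0)
    (hX : ∀ n ω, X (n + 1) ω = X n ω + (1 - J n ω) - (if X n ω = 0 then 0 else J n ω))
    (hL0 : ∀ ω, L 0 ω = 0)
    (hL : ∀ n ω, L (n + 1) ω =
      if J n ω = 0 ∧ U n ω < q / p then L n ω + 1
      else if J n ω = 1 ∧ 0 < L n ω then L n ω - 1 else L n ω)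
    (B : ℕ → Ω → ℕ)
    (hB : ∀ n ω, B n ω =
      ((Finset.range n).filter (fun i => J i ω = 0 ∧ q / p ≤ U i ω)).card)
    (R : ℕ → Ω → ℤ)
    (hR : ∀ n ω, R n ω = (X n ω : ℤ) - (L n ω : ℤ)) :
    ∀ n : ℕ, ∀ ω : Ω,
      (B n ω : ℤ) - R n ω =
        (∑ i ∈ Finset.range n, (J i ω : ℤ) * (if L i ω = 0 then 1 else 0)) -
        (∑ i ∈ Finset.range n, (J i ω : ℤ) * (if X i ω = 0 then 1 else 0)) :=
  gms_B_sub_R_decomposition_general p q J U hJval X L hX0 hX hL0 hL B hB R hR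
end

section
/- The expected number of time indices i during the first excursion of L from 0 at which L_i = 0 and J_i = 1 equals 1; that is, E[Σ_{i=0}^{σ_2 − 1} J_i·1{L_i = 0}] = 1, where σ_2 = inf{n > 0 : L_{n−1} = 1 and L_n = 0}. -/
open MeasureTheory ProbabilityTheory
open scoped ENNReal Classical

/-!
Before the walk first steps from 1 down to 0, it can only be at 0 at time `i` if it has not
moved at all: from 0 the only possible move is up, and a walk that has gone up can only come back
to 0 through a step from 1 to 0. So the `i`-th summand is the indicator that none of the up-events
`{J j = 0, U j < q/p}`, `j < i`, occurred and that `J i = 1`. These are events of the independent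
trials `(J n, U n)`; an up-event has probability `p · (q/p) = q`, so the expectation is
`∑ (1 - q)^i q = 1`.
-/

theorem ENNReal.tsum_one_sub_pow_mul {a : ℝ≥0∞} (ha : a ≤ 1) (b : ℝ≥0∞) :
    ∑' i : ℕ, (1 - a) ^ i * b = b / a := by
  rw [ENNReal.tsum_mul_right, ENNReal.tsum_geometric, ENNReal.sub_sub_cancel ENNReal.one_ne_top ha,
    ENNReal.div_eq_inv_mul]

/-- The paper's event `σ₂ > i`. -/
def NotReturnedBy (l : ℕ → ℕ) (i : ℕ) : Prop :=
  ∀ k ≤ i, ¬(0 < k ∧ l (k - 1) = 1 ∧ l k = 0)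

section PathFromZero

variable {l : ℕ → ℕ} {up : ℕ → Prop}

theorem forall_le_eq_zero_iff_forall_lt_not_up (hl0 : l 0 = 0)
    (hup : ∀ n, up n → l (n + 1) = l n + 1) (hstay : ∀ n, ¬up n → l (n + 1) ≤ l n) (i : ℕ) :
    (∀ j ≤ i, l j = 0) ↔ ∀ j < i, ¬up j := by
  refine ⟨fun h j hj hj_up => ?_, fun h j hj => ?_⟩
  · have := hup j hj_up
    rw [h j hj.le, h (j + 1) hj] at this
    exact absurd this zero_ne_one
  · induction j with
    | zero => exact hl0
    | succ k ih => have := hstay k (h k (by omega)); have := ih (by omega); omega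

theorem forall_le_eq_zero_of_notReturnedBy (hl0 : l 0 = 0) (hdown : ∀ n, l n ≤ l (n + 1) + 1)
    {i : ℕ} (hret : NotReturnedBy l i) (hi : l i = 0) : ∀ j ≤ i, l j = 0 := by
  induction i with
  | zero => intro j hj; rw [Nat.le_zero.1 hj]; exact hl0
  | succ m ih =>
    have hm : l m = 0 := by
      by_contra hm
      have := hdown m
      exact hret (m + 1) le_rfl ⟨m.succ_pos, by simp only [Nat.add_sub_cancel]; omega, hi⟩
    intro j hj
    rcases Nat.of_le_succ hj with hj | rfl
    · exact ih (fun k hk => hret k (by omega)) hm j hj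
    · exact hi

theorem notReturnedBy_and_eq_zero_iff (hl0 : l 0 = 0) (hup : ∀ n, up n → l (n + 1) = l n + 1)
    (hstay : ∀ n, ¬up n → l (n + 1) ≤ l n) (hdown : ∀ n, l n ≤ l (n + 1) + 1) (i : ℕ) :
    NotReturnedBy l i ∧ l i = 0 ↔ ∀ j < i, ¬up j := by
  rw [← forall_le_eq_zero_iff_forall_lt_not_up hl0 hup hstay]
  refine ⟨fun ⟨hret, hi⟩ => forall_le_eq_zero_of_notReturnedBy hl0 hdown hret hi,
    fun h => ⟨?_, h i le_rfl⟩⟩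
  rintro k hk ⟨-, hk1, -⟩
  rw [h (k - 1) (by omega)] at hk1
  exact zero_ne_one hk1

theorem notReturnedBy_and_eq_zero_iff_of_eq_ite {down : ℕ → Prop} [DecidablePred up]
    [DecidablePred down] (hl0 : l 0 = 0)
    (hl : ∀ n, l (n + 1) = if up n then l n + 1 else if down n ∧ 0 < l n then l n - 1 else l n)
    (i : ℕ) : NotReturnedBy l i ∧ l i = 0 ↔ ∀ j < i, ¬up j :=
  notReturnedBy_and_eq_zero_iff hl0 (fun n hn => by rw [hl, if_pos hn])
    (fun n hn => by rw [hl, if_neg hn]; split_ifs <;> omega)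
    (fun n => by rw [hl]; split_ifs <;> omega) i

end PathFromZero

namespace ProbabilityTheory

open Function

variable {Ω ι κ : Type*} {mΩ : MeasurableSpace Ω} {μ : Measure Ω}

theorem iIndep.iIndepSet_of_measurableSet_biSup {m : ι → MeasurableSpace Ω}
    (hle : ∀ i, m i ≤ mΩ) (h : iIndep m μ) {F : κ → Set ι} (hF : Pairwise (Disjoint on F))
    {A : κ → Set Ω} (hA : ∀ k, MeasurableSet[⨆ i ∈ F k, m i] (A k)) : iIndepSet A μ := by
  have := h.isProbabilityMeasure
  have hAm : ∀ k, MeasurableSet (A k) := fun k => iSup₂_le (fun i _ => hle i) _ (hA k)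
  refine (iIndepSet_iff_meas_biInter hAm).2 fun s => ?_
  induction s using Finset.induction_on with
  | empty => simp
  | insert a s ha ih =>
    have hdisj : Disjoint (F a) (⋃ k ∈ s, F k) :=
      Set.disjoint_iUnion₂_right.2 fun k hk => hF (ne_of_mem_of_not_mem hk ha).symm
    have hsm : MeasurableSet[⨆ i ∈ ⋃ k ∈ s, F k, m i] (⋂ k ∈ s, A k) :=
      Finset.measurableSet_biInter _ fun k hk =>
        (biSup_mono fun i hi => Set.mem_biUnion hk hi : (⨆ i ∈ F k, m i) ≤ _) _ (hA k)
    rw [Finset.set_biInter_insert, Finset.prod_insert ha, ← ih]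
    exact (Indep_iff _ _ _).1 (indep_iSup_of_disjoint hle h hdisj) _ _ (hA a) hsm

variable {β : Type*} [MeasurableSpace β] {f g : ℕ → Ω → β}

theorem iIndepFun.iIndepSet_of_measurableSet_comap_prodMk (hf : ∀ n, Measurable (f n))
    (hg : ∀ n, Measurable (g n)) (h : iIndepFun (Sum.elim f g) μ) {A : ℕ → Set Ω}
    (hA : ∀ n, MeasurableSet[MeasurableSpace.comap (fun ω => (f n ω, g n ω)) inferInstance]
      (A n)) :
    iIndepSet A μ := by
  have hX : ∀ s, Measurable (Sum.elim f g s) := by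
    rintro (n | n)
    exacts [hf n, hg n]
  refine h.iIndep.iIndepSet_of_measurableSet_biSup (fun s => (hX s).comap_le)
    (F := fun n => {.inl n, .inr n}) (fun a b hab => by simp [hab.symm]) fun n => ?_
  let m (s : ℕ ⊕ ℕ) : MeasurableSpace Ω := MeasurableSpace.comap (Sum.elim f g s) inferInstance
  have hle : m (.inl n) ⊔ m (.inr n) ≤ ⨆ s ∈ ({.inl n, .inr n} : Set (ℕ ⊕ ℕ)), m s :=
    sup_le (le_iSup₂ (f := fun s _ => m s) (.inl n) (by simp))
      (le_iSup₂ (f := fun s _ => m s) (.inr n) (by simp))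
  exact hle _ ((MeasurableSpace.comap_prodMk (f n) (g n)).le _ (hA n))

theorem iIndepFun.measure_biInter_range_inter_of_comap_prodMk (hf : ∀ n, Measurable (f n))
    (hg : ∀ n, Measurable (g n)) (h : iIndepFun (Sum.elim f g) μ) {A B : ℕ → Set Ω}
    (hA : ∀ n, MeasurableSet[MeasurableSpace.comap (fun ω => (f n ω, g n ω)) inferInstance]
      (A n))
    (hB : ∀ n, MeasurableSet[MeasurableSpace.comap (fun ω => (f n ω, g n ω)) inferInstance]
      (B n))
    (n : ℕ) :
    μ ((⋂ j ∈ Finset.range n, A j) ∩ B n) = (∏ j ∈ Finset.range n, μ (A j)) * μ (B n) := by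
  have hAB : ∀ k, MeasurableSet[MeasurableSpace.comap (fun ω => (f k ω, g k ω)) inferInstance]
      (update A n (B n) k) := by
    intro k
    rcases eq_or_ne k n with rfl | hk
    · simpa using hB k
    · simpa [hk] using hA k
  have key := (h.iIndepSet_of_measurableSet_comap_prodMk hf hg hAB).meas_biInter
    (Finset.range (n + 1))
  rw [Finset.range_add_one, Finset.set_biInter_insert, Finset.prod_insert Finset.notMem_range_self,
    update_self, Set.inter_comm, mul_comm] at key
  have hupd : ∀ j ∈ Finset.range n, update A n (B n) j = A j :=
    fun j hj => update_of_ne (Finset.mem_range.1 hj).ne _ _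
  rwa [Set.iInter₂_congr hupd, Finset.prod_congr rfl fun j hj => congrArg μ (hupd j hj)] at key

theorem iIndepFun.lintegral_tsum_indicator_biInter_range_compl_inter (hf : ∀ n, Measurable (f n))
    (hg : ∀ n, Measurable (g n)) (h : iIndepFun (Sum.elim f g) μ) {A B : ℕ → Set Ω}
    (hA : ∀ n, MeasurableSet[MeasurableSpace.comap (fun ω => (f n ω, g n ω)) inferInstance]
      (A n))
    (hB : ∀ n, MeasurableSet[MeasurableSpace.comap (fun ω => (f n ω, g n ω)) inferInstance]
      (B n))
    {a b : ℝ≥0∞} (hμA : ∀ n, μ (A n) = a) (hμB : ∀ n, μ (B n) = b) :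
    ∫⁻ ω, ∑' i, ((⋂ j ∈ Finset.range i, (A j)ᶜ) ∩ B i).indicator 1 ω ∂μ = b / a := by
  have := h.isProbabilityMeasure
  have hmeas (n : ℕ) : ∀ s, MeasurableSet[MeasurableSpace.comap (fun ω => (f n ω, g n ω))
      inferInstance] s → MeasurableSet s := ((hf n).prodMk (hg n)).comap_le
  have hG (i : ℕ) : MeasurableSet ((⋂ j ∈ Finset.range i, (A j)ᶜ) ∩ B i) :=
    (Finset.measurableSet_biInter _ fun j _ => (hmeas j _ (hA j)).compl).inter (hmeas i _ (hB i))
  have hμAc (n : ℕ) : μ (A n)ᶜ = 1 - a := by rw [prob_compl_eq_one_sub (hmeas n _ (hA n)), hμA]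
  rw [lintegral_tsum fun i => (measurable_one.indicator (hG i)).aemeasurable]
  simp_rw [lintegral_indicator_one (hG _),
    h.measure_biInter_range_inter_of_comap_prodMk hf hg (fun n => (hA n).compl) hB, hμAc, hμB,
    Finset.prod_const, Finset.card_range]
  exact ENNReal.tsum_one_sub_pow_mul (hμA 0 ▸ prob_le_one) b

theorem measure_preimage_Iio_of_map_eq_uniform {U : Ω → ℝ} (hU : Measurable U)
    (hUdist : μ.map U = volume.restrict (Set.Icc 0 1)) {t : ℝ} (ht1 : t ≤ 1) :
    μ (U ⁻¹' Set.Iio t) = ENNReal.ofReal t := by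
  have hset : Set.Iio t ∩ Set.Icc 0 1 = Set.Ico 0 t := by
    ext x
    simp only [Set.mem_inter_iff, Set.mem_Iio, Set.mem_Icc, Set.mem_Ico]
    exact ⟨fun ⟨hxt, hx0, _⟩ => ⟨hx0, hxt⟩, fun ⟨hx0, hxt⟩ => ⟨hxt, hx0, by linarith⟩⟩
  rw [← Measure.map_apply hU measurableSet_Iio, hUdist, Measure.restrict_apply measurableSet_Iio,
    hset, Real.volume_Ico, sub_zero]

theorem measure_eq_zero_and_lt_div_eq [IsProbabilityMeasure μ] {J : Ω → ℕ} {U : Ω → ℝ}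
    {p q : ℝ} (hJ : Measurable J) (hU : Measurable U) (hJval : ∀ ω, J ω ≤ 1)
    (hJdist : μ {ω | J ω = 1} = ENNReal.ofReal q)
    (hUdist : μ.map U = volume.restrict (Set.Icc 0 1)) (hind : IndepFun (fun ω => (J ω : ℝ)) U μ)
    (hp : 0 < p) (hq : 0 ≤ q) (hpq : p + q = 1) (hqp : q ≤ p) :
    μ {ω | J ω = 0 ∧ U ω < q / p} = ENNReal.ofReal q := by
  have hJ0 : (fun ω => (J ω : ℝ)) ⁻¹' {0} = {ω | J ω = 1}ᶜ := by
    ext ω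
    have := hJval ω
    simp only [Set.mem_preimage, Set.mem_singleton_iff, Nat.cast_eq_zero, Set.mem_compl_iff,
      Set.mem_ofPred_eq]
    omega
  have hJ1 : MeasurableSet {ω | J ω = 1} := hJ (measurableSet_singleton 1)
  have hJ0_prob : μ ((fun ω => (J ω : ℝ)) ⁻¹' {0}) = ENNReal.ofReal p := by
    rw [hJ0, prob_compl_eq_one_sub hJ1, hJdist, ← ENNReal.ofReal_one,
      ← ENNReal.ofReal_sub _ hq, ← hpq, add_sub_cancel_right]
  have hset : {ω | J ω = 0 ∧ U ω < q / p} =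
      (fun ω => (J ω : ℝ)) ⁻¹' {0} ∩ U ⁻¹' Set.Iio (q / p) := by
    ext ω
    simp [Nat.cast_eq_zero]
  rw [hset, hind.measure_inter_preimage_eq_mul _ _ (measurableSet_singleton 0) measurableSet_Iio,
    hJ0_prob, measure_preimage_Iio_of_map_eq_uniform hU hUdist ((div_le_one hp).2 hqp),
    ← ENNReal.ofReal_mul hp.le, mul_div_cancel₀ _ hp.ne']

end ProbabilityTheory

/-- **GMS model: expected occupation of `(0,1)` during one excursion of `L`.**
`E[Σ_{i=0}^{σ₂−1} J_i·1{L_i = 0}] = 1`, where `σ₂ = inf{n > 0 : L_{n−1} = 1 ∧ L_n = 0}`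
(the index `i` ranges over times strictly before the first return of `L` to `0` from `1`). -/
theorem gms_excursion_occupation_mean_one
    {Ω : Type*} [MeasurableSpace Ω] (μ : Measure Ω) [IsProbabilityMeasure μ]
    (p q : ℝ) (hp : 1 / 2 < p) (hp1 : p < 1) (hq : q = 1 - p)
    (J : ℕ → Ω → ℕ) (U : ℕ → Ω → ℝ)
    (hJmeas : ∀ n, Measurable (J n))
    (hUmeas : ∀ n, Measurable (U n))
    (hJval : ∀ n ω, J n ω ≤ 1)
    (hJdist : ∀ n, μ {ω | J n ω = 1} = ENNReal.ofReal q)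
    (hUdist : ∀ n, Measure.map (U n) μ = volume.restrict (Set.Icc (0 : ℝ) 1))
    (hindep : iIndepFun
      (Sum.elim (fun n ω => (J n ω : ℝ)) U) μ)
    (L : ℕ → Ω → ℕ)
    (hL0 : ∀ ω, L 0 ω = 0)
    (hL : ∀ n ω, L (n + 1) ω =
      if J n ω = 0 ∧ U n ω < q / p then L n ω + 1
      else if J n ω = 1 ∧ 0 < L n ω then L n ω - 1 else L n ω)
    :
    ∫⁻ ω, (∑' i : ℕ,
        if (∀ k ≤ i, ¬(0 < k ∧ L (k - 1) ω = 1 ∧ L k ω = 0)) ∧ J i ω = 1 ∧ L i ω = 0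
        then (1 : ℝ≥0∞) else 0) ∂μ = 1 := by
  have hJ (n : ℕ) : Measurable fun ω => (J n ω : ℝ) := measurable_from_top.comp (hJmeas n)
  let up (n : ℕ) : Set Ω := {ω | J n ω = 0 ∧ U n ω < q / p}
  let G (i : ℕ) : Set Ω := (⋂ j ∈ Finset.range i, (up j)ᶜ) ∩ {ω | J i ω = 1}
  have hup_comap (n : ℕ) : MeasurableSet[MeasurableSpace.comap (fun ω => ((J n ω : ℝ), U n ω))
      inferInstance] (up n) :=
    ⟨{0} ×ˢ Set.Iio (q / p), (measurableSet_singleton 0).prod measurableSet_Iio, by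
      ext ω; simp [up, Nat.cast_eq_zero]⟩
  have hE_comap (n : ℕ) : MeasurableSet[MeasurableSpace.comap (fun ω => ((J n ω : ℝ), U n ω))
      inferInstance] {ω | J n ω = 1} :=
    ⟨{1} ×ˢ Set.univ, (measurableSet_singleton 1).prod MeasurableSet.univ, by
      ext ω; simp [Nat.cast_eq_one]⟩
  have hpath (ω : Ω) (i : ℕ) :
      ((∀ k ≤ i, ¬(0 < k ∧ L (k - 1) ω = 1 ∧ L k ω = 0)) ∧ J i ω = 1 ∧ L i ω = 0) ↔ ω ∈ G i := by
    have key := notReturnedBy_and_eq_zero_iff_of_eq_ite (l := (L · ω))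
      (up := fun n => J n ω = 0 ∧ U n ω < q / p) (hL0 ω) (hL · ω) i
    simp only [G, up, Set.mem_inter_iff, Set.mem_iInter₂, Finset.mem_range, Set.mem_compl_iff,
      Set.mem_ofPred_eq]
    unfold NotReturnedBy at key
    tauto
  calc _ = ∫⁻ ω, ∑' i, (G i).indicator 1 ω ∂μ :=
        lintegral_congr fun ω => tsum_congr fun i => by
          simp only [Set.indicator_apply, hpath, Pi.one_apply]
    _ = ENNReal.ofReal q / ENNReal.ofReal q :=
        hindep.lintegral_tsum_indicator_biInter_range_compl_inter hJ hUmeas hup_comap hE_comap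
          (fun n => measure_eq_zero_and_lt_div_eq (hJmeas n) (hUmeas n) (hJval n) (hJdist n)
            (hUdist n) (hindep.indepFun Sum.inl_ne_inr) (by linarith) (by linarith) (by linarith)
            (by linarith)) hJdist
    _ = 1 := ENNReal.div_self (by simp; linarith) ENNReal.ofReal_ne_top
end
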